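/- Let 0 < α ≤ 1. Then the sequence m ↦ S_α(m) is nondecreasing in m on the positive integers; consequently sup_{m≥1} S_α(m) = lim_{m→∞} S_α(m) = 2/α. -/

import Mathlib

/-- `S α m = m^{-α} ∑_{n=1}^m n^{α-1} + m^{α} ∑_{n=m+1}^∞ n^{-α-1}`, where the tail sum
over `n > m` is written as `∑_{k≥0} (m+1+k)^{-α-1}`. -/
noncomputable def S (α : ℝ) (m : ℕ+) : ℝ :=
  (m : ℝ) ^ (-α) * ∑ n ∈ Finset.Icc 1 (m : ℕ), (n : ℝ) ^ (α - 1) +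
    (m : ℝ) ^ α * ∑' k : ℕ, ((m : ℝ) + 1 + (k : ℝ)) ^ (-α - 1)

/-!
Write `A m = ∑_{n ≤ m} n^{α-1}` and `B m = ∑_{n > m} n^{-α-1}`, so that
`S_α(m) = m^{-α} A m + m^α B m`. Comparing each term with the increment of an antiderivative
(mean value theorem) gives `((m+1)^α - 1)/α ≤ A m ≤ m^α/α` (this is where `α ≤ 1` enters) and
`(m+1)^{-α}/α ≤ B m ≤ m^{-α}/α`; hence `S_α(m) ≤ 2/α` and `S_α(m) → 2/α`.
For monotonicity, `S_α(m+1) - S_α(m) = ((m+1)^{-α} - m^{-α}) A m + ((m+1)^α - m^α) B m`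
exactly, and inserting `A m ≤ m^α/α` and `B m ≥ (m+1)^{-α}/α` makes the right-hand side vanish.
-/

open Real Filter Finset Topology

lemma rpow_slope_mem_Icc {β a : ℝ} (hβ : β ≤ 0) (hβ1 : β + 1 ≠ 0) (ha : 0 < a) :
    ((a + 1) ^ (β + 1) - a ^ (β + 1)) / (β + 1) ∈ Set.Icc ((a + 1) ^ β) (a ^ β) := by
  have hderiv : ∀ x : ℝ, 0 < x → HasDerivAt (fun t : ℝ => t ^ (β + 1) / (β + 1)) (x ^ β) x :=
    fun x hx => by
      simpa [hβ1] using (hasDerivAt_rpow_const (p := β + 1) (Or.inl hx.ne')).div_const (β + 1)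
  obtain ⟨c, ⟨hac, hca⟩, hc⟩ := exists_hasDerivAt_eq_slope _ (fun t : ℝ => t ^ β)
    (lt_add_one a)
    (fun x hx => (hderiv x (ha.trans_le hx.1)).continuousAt.continuousWithinAt)
    (fun x hx => hderiv x (ha.trans hx.1))
  rw [add_sub_cancel_left, div_one, ← sub_div] at hc
  rw [← hc]
  exact ⟨rpow_le_rpow_of_nonpos (ha.trans hac) hca.le hβ, rpow_le_rpow_of_nonpos ha hac.le hβ⟩

lemma rpow_slope_mem_Icc_of_le_one {α a : ℝ} (hα : α ≠ 0) (hα1 : α ≤ 1) (ha : 0 < a) :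
    ((a + 1) ^ α - a ^ α) / α ∈ Set.Icc ((a + 1) ^ (α - 1)) (a ^ (α - 1)) := by
  simpa using rpow_slope_mem_Icc (β := α - 1) (by linarith) (by simpa using hα) ha

lemma rpow_neg_slope_mem_Icc {α a : ℝ} (hα : 0 < α) (ha : 0 < a) :
    (a ^ (-α) - (a + 1) ^ (-α)) / α ∈ Set.Icc ((a + 1) ^ (-α - 1)) (a ^ (-α - 1)) := by
  have h := rpow_slope_mem_Icc (β := -α - 1) (by linarith) (by simp [hα.ne']) ha
  rwa [sub_add_cancel, div_neg, ← neg_div, neg_sub] at h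

noncomputable def headSum (α : ℝ) (m : ℕ) : ℝ := ∑ n ∈ Icc 1 m, (n : ℝ) ^ (α - 1)

noncomputable def tailSum (α : ℝ) (m : ℕ) : ℝ := ∑' k : ℕ, ((m : ℝ) + 1 + k) ^ (-α - 1)

section HeadSum

variable {α : ℝ}

lemma headSum_succ (m : ℕ) :
    headSum α (m + 1) = headSum α m + ((m : ℝ) + 1) ^ (α - 1) := by
  rw [headSum, headSum, sum_Icc_succ_top (by omega)]
  push_cast
  rfl

lemma headSum_le (hα : 0 < α) (hα1 : α ≤ 1) (m : ℕ) : headSum α m ≤ (m : ℝ) ^ α / α := by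
  induction m with
  | zero => simp [headSum, zero_rpow hα.ne']
  | succ m ih =>
    have hstep : ((m : ℝ) + 1) ^ (α - 1) ≤ (((m : ℝ) + 1) ^ α - (m : ℝ) ^ α) / α := by
      rcases m.eq_zero_or_pos with rfl | hm
      · simpa [zero_rpow hα.ne'] using one_le_one_div hα hα1
      · exact (rpow_slope_mem_Icc_of_le_one hα.ne' hα1 (by exact_mod_cast hm)).1
    rw [sub_div] at hstep
    rw [headSum_succ]
    push_cast
    linarith

lemma add_one_rpow_sub_one_div_le_headSum (hα : α ≠ 0) (hα1 : α ≤ 1) (m : ℕ) :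
    (((m : ℝ) + 1) ^ α - 1) / α ≤ headSum α m := by
  induction m with
  | zero => simp [headSum]
  | succ m ih =>
    have hstep := (rpow_slope_mem_Icc_of_le_one hα hα1 (a := (m : ℝ) + 1) (by positivity)).2
    rw [sub_div] at hstep ih ⊢
    rw [headSum_succ]
    push_cast
    linarith

end HeadSum

section TailSum

variable {α c : ℝ}

lemma summable_add_rpow_neg_sub_one (hα : 0 < α) (hc : 0 < c) :
    Summable fun k : ℕ => (c + k) ^ (-α - 1) := by
  refine ((Real.summable_one_div_nat_add_rpow c (α + 1)).2 (by linarith)).congr fun k => ?_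
  have hk : 0 < (k : ℝ) + c := by positivity
  rw [abs_of_pos hk, one_div, ← rpow_neg hk.le, add_comm (k : ℝ), neg_add']

lemma hasSum_sub_succ_of_antitone {f : ℕ → ℝ} (hf : Antitone f) (hlim : Tendsto f atTop (𝓝 0)) :
    HasSum (fun k => f k - f (k + 1)) (f 0) := by
  rw [hasSum_iff_tendsto_nat_of_nonneg fun k => sub_nonneg.2 (hf k.le_succ)]
  simp only [sum_range_sub']
  simpa using tendsto_const_nhds.sub hlim

lemma hasSum_add_rpow_neg_sub (hα : 0 < α) (hc : 0 < c) :
    HasSum (fun k : ℕ => (c + k) ^ (-α) - (c + k + 1) ^ (-α)) (c ^ (-α)) := by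
  simpa [add_assoc] using hasSum_sub_succ_of_antitone (f := fun k : ℕ => (c + k) ^ (-α))
    (fun i j hij => rpow_le_rpow_of_nonpos (by positivity) (by gcongr) (by linarith))
    ((tendsto_rpow_neg_atTop hα).comp
      (tendsto_atTop_add_const_left _ c tendsto_natCast_atTop_atTop))

lemma rpow_neg_div_le_tsum (hα : 0 < α) (hc : 0 < c) :
    c ^ (-α) / α ≤ ∑' k : ℕ, (c + k) ^ (-α - 1) := by
  refine hasSum_le (fun k => ?_) ((hasSum_add_rpow_neg_sub hα hc).div_const α)
    (summable_add_rpow_neg_sub_one hα hc).hasSum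
  exact (rpow_neg_slope_mem_Icc hα (a := c + k) (by positivity)).2

lemma tsum_le_rpow_neg_div (hα : 0 < α) (hc : 0 < c) :
    ∑' k : ℕ, (c + 1 + k) ^ (-α - 1) ≤ c ^ (-α) / α := by
  refine hasSum_le (fun k => ?_) (summable_add_rpow_neg_sub_one hα (by positivity)).hasSum
    ((hasSum_add_rpow_neg_sub hα hc).div_const α)
  rw [add_right_comm]
  exact (rpow_neg_slope_mem_Icc hα (a := c + k) (by positivity)).1

lemma tailSum_eq_add (hα : 0 < α) (m : ℕ) :
    tailSum α m = ((m : ℝ) + 1) ^ (-α - 1) + tailSum α (m + 1) := by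
  rw [tailSum, (summable_add_rpow_neg_sub_one hα (by positivity)).tsum_eq_zero_add, tailSum]
  push_cast
  ring_nf

lemma rpow_neg_div_le_tailSum (hα : 0 < α) (m : ℕ) : ((m : ℝ) + 1) ^ (-α) / α ≤ tailSum α m :=
  rpow_neg_div_le_tsum hα (by positivity)

lemma tailSum_le_rpow_neg_div (hα : 0 < α) {m : ℕ} (hm : 0 < m) :
    tailSum α m ≤ (m : ℝ) ^ (-α) / α :=
  tsum_le_rpow_neg_div hα (by exact_mod_cast hm)

end TailSum

section S

variable {α : ℝ}

lemma S_eq (m : ℕ+) :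
    S α m = (m : ℝ) ^ (-α) * headSum α m + (m : ℝ) ^ α * tailSum α m := rfl

lemma S_add_one_sub_S (hα : 0 < α) (m : ℕ+) :
    S α (m + 1) - S α m = (((m : ℝ) + 1) ^ (-α) - (m : ℝ) ^ (-α)) * headSum α m +
      (((m : ℝ) + 1) ^ α - (m : ℝ) ^ α) * tailSum α m := by
  have hr : (0 : ℝ) < m + 1 := by positivity
  have e : ((m : ℝ) + 1) ^ (-α) * ((m : ℝ) + 1) ^ (α - 1) =
      ((m : ℝ) + 1) ^ α * ((m : ℝ) + 1) ^ (-α - 1) := by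
    rw [← rpow_add hr, ← rpow_add hr]
    ring_nf
  rw [S_eq, S_eq, PNat.add_coe, PNat.one_coe, headSum_succ, tailSum_eq_add hα (m : ℕ)]
  push_cast
  linear_combination e

lemma S_le_S_add_one (hα : 0 < α) (hα1 : α ≤ 1) (m : ℕ+) : S α m ≤ S α (m + 1) := by
  have hm : (0 : ℝ) < m := by positivity
  have hA := headSum_le hα hα1 m
  have hB := rpow_neg_div_le_tailSum hα m
  have hpq : (m : ℝ) ^ α ≤ ((m : ℝ) + 1) ^ α := by gcongr; linarith
  rw [← sub_nonneg, S_add_one_sub_S hα, rpow_neg hm.le, rpow_neg (by positivity)]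
  rw [rpow_neg (by positivity)] at hB
  set p := (m : ℝ) ^ α
  set q := ((m : ℝ) + 1) ^ α
  have hp : 0 < p := by positivity
  have hq : 0 < q := hp.trans_le hpq
  calc 0 = (q⁻¹ - p⁻¹) * (p / α) + (q - p) * (q⁻¹ / α) := by field_simp; ring
    _ ≤ (q⁻¹ - p⁻¹) * headSum α m + (q - p) * tailSum α m :=
      add_le_add (mul_le_mul_of_nonpos_left hA (by rw [sub_nonpos]; gcongr))
        (mul_le_mul_of_nonneg_left hB (by linarith))

lemma S_le_two_div (hα : 0 < α) (hα1 : α ≤ 1) (m : ℕ+) : S α m ≤ 2 / α := by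
  have hm : (0 : ℝ) < m := by positivity
  have hA := headSum_le hα hα1 m
  have hB := tailSum_le_rpow_neg_div hα m.pos
  rw [rpow_neg hm.le] at hB
  rw [S_eq, rpow_neg hm.le]
  set p := (m : ℝ) ^ α
  have hp : 0 < p := by positivity
  calc p⁻¹ * headSum α m + p * tailSum α m ≤ p⁻¹ * (p / α) + p * (p⁻¹ / α) := by gcongr
    _ = 2 / α := by field_simp; ring

lemma le_S (hα : 0 < α) (hα1 : α ≤ 1) (m : ℕ+) :
    (1 - (m : ℝ) ^ (-α) + ((m : ℝ) / (m + 1)) ^ α) / α ≤ S α m := by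
  have hm : (0 : ℝ) < m := by positivity
  have hA : ((m : ℝ) ^ α - 1) / α ≤ headSum α m :=
    le_trans (by gcongr; linarith) (add_one_rpow_sub_one_div_le_headSum hα.ne' hα1 m)
  have hB := rpow_neg_div_le_tailSum hα m
  rw [rpow_neg (by positivity)] at hB
  rw [S_eq, div_rpow hm.le (by positivity), rpow_neg hm.le]
  set p := (m : ℝ) ^ α
  set q := ((m : ℝ) + 1) ^ α
  have hp : 0 < p := by positivity
  have hq : 0 < q := by positivity
  calc (1 - p⁻¹ + p / q) / α = p⁻¹ * ((p - 1) / α) + p * (q⁻¹ / α) := by field_simp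
    _ ≤ p⁻¹ * headSum α m + p * tailSum α m := by gcongr

lemma tendsto_S (hα : 0 < α) (hα1 : α ≤ 1) :
    Tendsto (fun m : ℕ+ => S α m) atTop (𝓝 (2 / α)) := by
  have hlow : Tendsto (fun m : ℕ => (1 - (m : ℝ) ^ (-α) + ((m : ℝ) / (m + 1)) ^ α) / α)
      atTop (𝓝 (2 / α)) := by
    have h1 := (tendsto_rpow_neg_atTop hα).comp tendsto_natCast_atTop_atTop
    have h2 := (tendsto_natCast_div_add_atTop (1 : ℝ)).rpow_const (p := α) (Or.inl one_ne_zero)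
    rw [one_rpow] at h2
    have h := (((tendsto_const_nhds (x := (1 : ℝ))).sub h1).add h2).div_const α
    rwa [sub_zero, one_add_one_eq_two] at h
  exact tendsto_of_tendsto_of_tendsto_of_le_of_le (PNat.tendsto_comp_val_iff.2 hlow)
    tendsto_const_nhds (le_S hα hα1) (S_le_two_div hα hα1)

end S

theorem monotone_S_of_le_one (α : ℝ) (hα : 0 < α) (hα1 : α ≤ 1) :
    Monotone (fun m : ℕ+ => S α m) ∧
    (⨆ m : ℕ+, S α m) = 2/α ∧
    Filter.Tendsto (fun m : ℕ+ => S α m) Filter.atTop (nhds (2/α)) := by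
  have hmono : Monotone (fun m : ℕ+ => S α m) :=
    monotone_of_le_succ fun m _ => by simpa using S_le_S_add_one hα hα1 m
  have hlim := tendsto_S hα hα1
  refine ⟨hmono, tendsto_nhds_unique (tendsto_atTop_ciSup hmono ⟨2 / α, ?_⟩) hlim, hlim⟩
  rintro _ ⟨m, rfl⟩
  exact S_le_two_div hα hα1 m
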